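/- arXiv:2505.24526 — 6 statements merged into one kernel-verified Lean document; each statement's English description precedes it below -/
import Mathlib

section
/- Let w_1, ..., w_d be unit vectors in K^n forming an equiangular tight frame with d = n(n+1)/2 if K = ℝ and d = n² if K = ℂ, so that x = (n/d) Σ_{i=1}^d ⟨x, w_i⟩ w_i for all x and |⟨w_i, w_j⟩| = φ for i ≠ j, where φ = 1/√(n+2) (real case) or φ = 1/√(n+1) (complex case). Then for every j, w_j = C · Σ_{i=1}^d sgn⟨w_j, w_i⟩ w_i, where C = n/(d·δ) and δ = (2/(n+1))(1 + ((n-1)/2)√(n+2)) in the real case, δ = (1/n)(1 + (n-1)√(n+1)) in the complex case. -/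
set_option maxHeartbeats 1000000

/-- If `w 1, ..., w d` is a maximal equiangular tight frame in `𝕜^n`
(`d = n(n+1)/2`, `φ = 1/√(n+2)` in the real case; `d = n²`, `φ = 1/√(n+1)` in the
complex case), then `w j = C · ∑ i, sgn⟨w j, w i⟩ • w i` with `C = n/(d·δ)`,
where `δ = δ_𝕜(n)` and `sgn z = z/|z|`. Here the paper's inner product
`⟨x, y⟩` (linear in the first variable) is Mathlib's `inner y x`. -/
theorem maximal_etf_sign_combination {𝕜 : Type*} [RCLike 𝕜] (n d : ℕ) (hn : 2 ≤ n)
    (φ δ : ℝ)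
    (hcase :
      ((RCLike.I : 𝕜) = 0 ∧ (d : ℝ) = (n : ℝ) * ((n : ℝ) + 1) / 2 ∧
        φ = 1 / Real.sqrt ((n : ℝ) + 2) ∧
        δ = 2 / ((n : ℝ) + 1) * (1 + ((n : ℝ) - 1) / 2 * Real.sqrt ((n : ℝ) + 2))) ∨
      ((RCLike.I : 𝕜) ≠ 0 ∧ (d : ℝ) = (n : ℝ) ^ 2 ∧
        φ = 1 / Real.sqrt ((n : ℝ) + 1) ∧
        δ = 1 / (n : ℝ) * (1 + ((n : ℝ) - 1) * Real.sqrt ((n : ℝ) + 1))))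
    (w : Fin d → EuclideanSpace 𝕜 (Fin n))
    (hunit : ∀ i, ‖w i‖ = 1)
    (hequi : ∀ i j, i ≠ j → ‖(inner 𝕜 (w i) (w j) : 𝕜)‖ = φ)
    (hframe : ∀ x : EuclideanSpace 𝕜 (Fin n),
      x = ((n : 𝕜) / (d : 𝕜)) • ∑ i, (inner 𝕜 (w i) x : 𝕜) • w i) :
    ∀ j, w j = (((n : ℝ) / ((d : ℝ) * δ) : ℝ) : 𝕜) •
      ∑ i, ((inner 𝕜 (w i) (w j) : 𝕜) / (‖(inner 𝕜 (w i) (w j) : 𝕜)‖ : 𝕜)) • w i := by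
  intro j
  have hn1 : (2:ℝ) ≤ (n:ℝ) := by exact_mod_cast hn
  have hnpos : (0:ℝ) < (n:ℝ) := by linarith
  have hfacts : 0 < φ ∧ 0 < δ ∧ (n:ℝ) ≤ (d:ℝ) ∧ (d:ℝ) * δ * φ = (n:ℝ) * φ + (d:ℝ) - (n:ℝ) := by
    rcases hcase with ⟨_, hd, hφ, hδ⟩ | ⟨_, hd, hφ, hδ⟩
    · have hs : (0:ℝ) < Real.sqrt ((n:ℝ) + 2) := Real.sqrt_pos.2 (by linarith)
      have hs2 : Real.sqrt ((n:ℝ) + 2) ^ 2 = (n:ℝ) + 2 := Real.sq_sqrt (by linarith)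
      refine ⟨by rw [hφ]; positivity, ?_, ?_, ?_⟩
      · rw [hδ]
        exact mul_pos (by positivity)
          (by nlinarith [mul_nonneg (show (0:ℝ) ≤ ((n:ℝ)-1)/2 by linarith) hs.le])
      · rw [hd]; nlinarith
      · rw [hd, hφ, hδ]; field_simp; nlinarith [hs2, hs]
    · have hs : (0:ℝ) < Real.sqrt ((n:ℝ) + 1) := Real.sqrt_pos.2 (by linarith)
      have hs2 : Real.sqrt ((n:ℝ) + 1) ^ 2 = (n:ℝ) + 1 := Real.sq_sqrt (by linarith)
      refine ⟨by rw [hφ]; positivity, ?_, ?_, ?_⟩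
      · rw [hδ]
        exact mul_pos (by positivity)
          (by nlinarith [mul_nonneg (show (0:ℝ) ≤ (n:ℝ)-1 by linarith) hs.le])
      · rw [hd]; nlinarith
      · rw [hd, hφ, hδ]; field_simp; nlinarith [hs2, hs]
  obtain ⟨hφpos, hδpos, hnd, hkey⟩ := hfacts
  have hdpos : (0:ℝ) < (d:ℝ) := lt_of_lt_of_le hnpos hnd
  have hdne : ((d:ℕ):𝕜) ≠ 0 := by
    simp only [ne_eq, Nat.cast_eq_zero]; rintro rfl; simp at hdpos
  have hnne : ((n:ℕ):𝕜) ≠ 0 := by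
    simp only [ne_eq, Nat.cast_eq_zero]; omega
  -- frame identity at w j
  have hsum : ∑ i, (inner 𝕜 (w i) (w j) : 𝕜) • w i = ((d:𝕜)/(n:𝕜)) • w j := by
    have h := hframe (w j)
    calc ∑ i, (inner 𝕜 (w i) (w j) : 𝕜) • w i
        = ((d:𝕜)/(n:𝕜)) • (((n:𝕜)/(d:𝕜)) • ∑ i, (inner 𝕜 (w i) (w j) : 𝕜) • w i) := by
          rw [smul_smul, div_mul_div_cancel₀ hnne, div_self hdne, one_smul]
      _ = ((d:𝕜)/(n:𝕜)) • w j := by rw [← h]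
  have hjj : (inner 𝕜 (w j) (w j) : 𝕜) = 1 := by
    rw [inner_self_eq_norm_sq_to_K, hunit j]; norm_num
  have hS : ∑ i, ((inner 𝕜 (w i) (w j) : 𝕜) / (‖(inner 𝕜 (w i) (w j) : 𝕜)‖ : 𝕜)) • w i
      = ((1 + ((d:ℝ)/(n:ℝ) - 1)/φ : ℝ) : 𝕜) • w j := by
    rw [← Finset.add_sum_erase _ _ (Finset.mem_univ j)]
    have h2 : ∀ i ∈ Finset.univ.erase j,
        ((inner 𝕜 (w i) (w j) : 𝕜) / (‖(inner 𝕜 (w i) (w j) : 𝕜)‖ : 𝕜)) • w i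
        = (((φ:ℝ)⁻¹ : ℝ) : 𝕜) • ((inner 𝕜 (w i) (w j) : 𝕜) • w i) := by
      intro i hi
      rw [hequi i j (Finset.ne_of_mem_erase hi), smul_smul, div_eq_inv_mul,
        RCLike.ofReal_inv]
    rw [Finset.sum_congr rfl h2, ← Finset.smul_sum,
      Finset.sum_erase_eq_sub (Finset.mem_univ j), hsum, hjj, norm_one]
    push_cast
    module
  rw [hS, smul_smul, ← RCLike.ofReal_mul]
  have hscal : (n:ℝ) / ((d:ℝ) * δ) * (1 + ((d:ℝ)/(n:ℝ) - 1)/φ) = 1 := by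
    have hδne : δ ≠ 0 := ne_of_gt hδpos
    have hφne : φ ≠ 0 := ne_of_gt hφpos
    field_simp
    nlinarith [hkey]
  rw [hscal, RCLike.ofReal_one, one_smul]
end

section
/- Let w_1, ..., w_d be a maximal equiangular tight frame in K^n (with d = n(n+1)/2 for K = ℝ, d = n² for K = ℂ). Then absconv{w_1, ..., w_d} ⊆ (n/(d·δ))·Z(w_1, ..., w_d), where δ = δ_K(n) as defined, absconv{w_1,...,w_d} = {Σ α_i w_i : Σ|α_i| ≤ 1}, and Z(w_1,...,w_d) = {Σ a_i w_i : |a_i| ≤ 1}. -/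
/-- If `w 1, ..., w d` is a maximal equiangular tight frame in `𝕜^n`, then
`absconv {w 1, ..., w d} ⊆ (n/(d·δ))·Z(w 1, ..., w d)`, where
`absconv {w i} = {∑ αᵢ • wᵢ : ∑ |αᵢ| ≤ 1}` and
`(n/(dδ))·Z(w i) = {∑ aᵢ • wᵢ : |aᵢ| ≤ n/(dδ)}`. -/
theorem absconv_subset_zonotope {𝕜 : Type*} [RCLike 𝕜] (n d : ℕ) (hn : 2 ≤ n)
    (φ δ : ℝ)
    (hcase :
      ((RCLike.I : 𝕜) = 0 ∧ (d : ℝ) = (n : ℝ) * ((n : ℝ) + 1) / 2 ∧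
        φ = 1 / Real.sqrt ((n : ℝ) + 2) ∧
        δ = 2 / ((n : ℝ) + 1) * (1 + ((n : ℝ) - 1) / 2 * Real.sqrt ((n : ℝ) + 2))) ∨
      ((RCLike.I : 𝕜) ≠ 0 ∧ (d : ℝ) = (n : ℝ) ^ 2 ∧
        φ = 1 / Real.sqrt ((n : ℝ) + 1) ∧
        δ = 1 / (n : ℝ) * (1 + ((n : ℝ) - 1) * Real.sqrt ((n : ℝ) + 1))))
    (w : Fin d → EuclideanSpace 𝕜 (Fin n))
    (hunit : ∀ i, ‖w i‖ = 1)
    (hequi : ∀ i j, i ≠ j → ‖(inner 𝕜 (w i) (w j) : 𝕜)‖ = φ)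
    (hframe : ∀ x : EuclideanSpace 𝕜 (Fin n),
      x = ((n : 𝕜) / (d : 𝕜)) • ∑ i, (inner 𝕜 (w i) x : 𝕜) • w i) :
    {x : EuclideanSpace 𝕜 (Fin n) |
        ∃ α : Fin d → 𝕜, (∑ i, ‖α i‖) ≤ 1 ∧ x = ∑ i, α i • w i} ⊆
      {x : EuclideanSpace 𝕜 (Fin n) |
        ∃ a : Fin d → 𝕜, (∀ i, ‖a i‖ ≤ (n : ℝ) / ((d : ℝ) * δ)) ∧ x = ∑ i, a i • w i} := by
  have hn2 : (2:ℝ) ≤ (n:ℝ) := by exact_mod_cast hn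
  obtain ⟨s, hs, hφ, hE, hdn⟩ :
      ∃ s : ℝ, 0 < s ∧ φ = 1 / s ∧ (d:ℝ) * δ = (n:ℝ) + ((d:ℝ) - (n:ℝ)) * s ∧
        (n:ℝ) < (d:ℝ) := by
    rcases hcase with ⟨-, hd, hφ, hδ⟩ | ⟨-, hd, hφ, hδ⟩
    · have h2 : (0:ℝ) < (n:ℝ) + 2 := by linarith
      have hsq : 0 < Real.sqrt ((n:ℝ)+2) := Real.sqrt_pos.mpr h2
      have hne : (n:ℝ) + 1 ≠ 0 := by linarith
      refine ⟨Real.sqrt ((n:ℝ)+2), hsq, hφ, ?_, ?_⟩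
      · rw [hd, hδ]; field_simp; ring
      · rw [hd]; nlinarith
    · have h2 : (0:ℝ) < (n:ℝ) + 1 := by linarith
      have hsq : 0 < Real.sqrt ((n:ℝ)+1) := Real.sqrt_pos.mpr h2
      have hne : (n:ℝ) ≠ 0 := by linarith
      refine ⟨Real.sqrt ((n:ℝ)+1), hsq, hφ, ?_, ?_⟩
      · rw [hd, hδ]; field_simp
      · rw [hd]; nlinarith
  have hn0 : (0:ℝ) < (n:ℝ) := by linarith
  have hd0 : (0:ℝ) < (d:ℝ) := by linarith
  have hφ0 : 0 < φ := by rw [hφ]; positivity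
  have hE0 : 0 < (d:ℝ) * δ := by nlinarith
  set c : ℝ := (n:ℝ) / ((d:ℝ) * δ) with hc
  have hc0 : 0 < c := div_pos hn0 hE0
  have hcE : c * ((n:ℝ) + ((d:ℝ)-(n:ℝ))*s) = (n:ℝ) := by
    rw [← hE, hc, div_mul_cancel₀ _ (ne_of_gt hE0)]
  have h1 : c * (((d:ℝ)-(n:ℝ)) * s) = (n:ℝ) * (1 - c) := by linear_combination hcE
  have hc1 : c < 1 := by nlinarith
  set μ : ℝ := c * s with hμ
  have hμφ : μ * φ = c := by rw [hμ, hφ]; field_simp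
  have hμ0 : 0 ≤ μ := by positivity
  have hnn : (n:ℝ) ≠ 0 := ne_of_gt hn0
  have hn𝕜 : (n:𝕜) ≠ 0 := Nat.cast_ne_zero.mpr (by omega)
  have hdnat : n < d := by exact_mod_cast hdn
  have hd𝕜 : (d:𝕜) ≠ 0 := Nat.cast_ne_zero.mpr (by omega)
  -- per-vector frame identity
  have hkey : ∀ k, ∑ j, (inner 𝕜 (w j) (w k) : 𝕜) • w j = ((d:𝕜)/(n:𝕜)) • w k := by
    intro k
    have h := hframe (w k)
    have hdiv : ((d:𝕜)/(n:𝕜)) * ((n:𝕜)/(d:𝕜)) = 1 := by field_simp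
    calc ∑ j, (inner 𝕜 (w j) (w k) : 𝕜) • w j
        = ((d:𝕜)/(n:𝕜)) • (((n:𝕜)/(d:𝕜)) • ∑ j, (inner 𝕜 (w j) (w k) : 𝕜) • w j) := by
          rw [smul_smul, hdiv, one_smul]
      _ = ((d:𝕜)/(n:𝕜)) • w k := by rw [← h]
  have hself : ∀ k, (inner 𝕜 (w k) (w k) : 𝕜) = 1 := by
    intro k
    rw [inner_self_eq_norm_sq_to_K, hunit]
    norm_num
  have hkey2 : ∀ k, ∑ j, (if j = k then (0:𝕜) else (inner 𝕜 (w j) (w k) : 𝕜)) • w j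
      = (((d:𝕜) - (n:𝕜))/(n:𝕜)) • w k := by
    intro k
    have e : ∀ j, (if j = k then (0:𝕜) else (inner 𝕜 (w j) (w k) : 𝕜)) • w j
        = (inner 𝕜 (w j) (w k) : 𝕜) • w j -
          (if j = k then (inner 𝕜 (w k) (w k) : 𝕜) • w k else 0) := by
      intro j
      split
      · subst ‹j = k›; simp
      · simp
    rw [Finset.sum_congr rfl fun j _ => e j, Finset.sum_sub_distrib,
      Finset.sum_ite_eq' Finset.univ k (fun _ => (inner 𝕜 (w k) (w k) : 𝕜) • w k)]
    simp only [Finset.mem_univ, if_true, hkey, hself, one_smul]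
    have : (((d:𝕜) - (n:𝕜))/(n:𝕜)) = (d:𝕜)/(n:𝕜) - 1 := by field_simp
    rw [this, sub_smul, one_smul]
  rintro x ⟨α, hα, rfl⟩
  refine ⟨fun j => (c:𝕜) * α j +
      (μ:𝕜) * ∑ k, (if j = k then (0:𝕜) else α k * (inner 𝕜 (w j) (w k) : 𝕜)), ?_, ?_⟩
  · -- the bound
    intro j
    have hterm : ∀ k, ‖(if j = k then (0:𝕜) else α k * (inner 𝕜 (w j) (w k) : 𝕜))‖
        = if j = k then 0 else ‖α k‖ * φ := by
      intro k
      split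
      · simp
      · rw [norm_mul, hequi j k ‹j ≠ k›]
    have hsum : ∑ k, (if j = k then (0:ℝ) else ‖α k‖ * φ)
        = (∑ k, ‖α k‖ * φ) - ‖α j‖ * φ := by
      have e : ∀ k, (if j = k then (0:ℝ) else ‖α k‖ * φ)
          = ‖α k‖ * φ - (if j = k then ‖α j‖ * φ else 0) := by
        intro k
        split
        · subst ‹j = k›; simp
        · simp
      rw [Finset.sum_congr rfl fun k _ => e k, Finset.sum_sub_distrib,
        Finset.sum_ite_eq Finset.univ j (fun _ => ‖α j‖ * φ)]
      simp
    have hS0 : ‖α j‖ ≤ ∑ k, ‖α k‖ :=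
      Finset.single_le_sum (fun k _ => norm_nonneg (α k)) (Finset.mem_univ j)
    calc ‖(c:𝕜) * α j + (μ:𝕜) * ∑ k, (if j = k then (0:𝕜) else α k * (inner 𝕜 (w j) (w k) : 𝕜))‖
        ≤ ‖(c:𝕜) * α j‖ + ‖(μ:𝕜) * ∑ k, (if j = k then (0:𝕜) else α k * (inner 𝕜 (w j) (w k) : 𝕜))‖ :=
          norm_add_le _ _
      _ = c * ‖α j‖ + μ * ‖∑ k, (if j = k then (0:𝕜) else α k * (inner 𝕜 (w j) (w k) : 𝕜))‖ := by
          rw [norm_mul, norm_mul, RCLike.norm_ofReal, RCLike.norm_ofReal,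
            abs_of_pos hc0, abs_of_nonneg hμ0]
      _ ≤ c * ‖α j‖ + μ * ∑ k, ‖(if j = k then (0:𝕜) else α k * (inner 𝕜 (w j) (w k) : 𝕜))‖ := by
          gcongr
          exact norm_sum_le _ _
      _ = c * ‖α j‖ + μ * ((∑ k, ‖α k‖ * φ) - ‖α j‖ * φ) := by
          rw [Finset.sum_congr rfl fun k _ => hterm k, hsum]
      _ = c * (∑ k, ‖α k‖) := by
          rw [← Finset.sum_mul]
          have : μ * ((∑ k, ‖α k‖) * φ - ‖α j‖ * φ) = (μ * φ) * ((∑ k, ‖α k‖) - ‖α j‖) := by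
            ring
          rw [this, hμφ]
          ring
      _ ≤ c * 1 := by
          gcongr
      _ = (n:ℝ) / ((d:ℝ) * δ) := by rw [mul_one, hc]
  · -- the representation
    have hreal : c + μ * (((d:ℝ) - (n:ℝ)) / (n:ℝ)) = 1 := by
      rw [hμ]
      field_simp
      linear_combination h1
    have hscal : (c:𝕜) + (μ:𝕜) * (((d:𝕜) - (n:𝕜))/(n:𝕜)) = 1 := by
      have h := congrArg (RCLike.ofReal (K := 𝕜)) hreal
      push_cast at h
      exact h
    have step1 : ∀ k, ∑ j, (if j = k then (0:𝕜) else α k * (inner 𝕜 (w j) (w k) : 𝕜)) • w j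
        = ((((d:𝕜) - (n:𝕜))/(n:𝕜)) * α k) • w k := by
      intro k
      have e : ∀ j, (if j = k then (0:𝕜) else α k * (inner 𝕜 (w j) (w k) : 𝕜)) • w j
          = α k • ((if j = k then (0:𝕜) else (inner 𝕜 (w j) (w k) : 𝕜)) • w j) := by
        intro j
        split
        · simp
        · rw [mul_smul]
      rw [Finset.sum_congr rfl fun j _ => e j, ← Finset.smul_sum, hkey2 k, smul_smul, mul_comm]
    calc ∑ i, α i • w i
        = ∑ i, (((c:𝕜) + (μ:𝕜) * (((d:𝕜) - (n:𝕜))/(n:𝕜))) * α i) • w i := by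
          rw [hscal]; simp
      _ = ∑ i, (((c:𝕜) * α i) • w i +
            (μ:𝕜) • ((((d:𝕜) - (n:𝕜))/(n:𝕜)) * α i) • w i) := by
          refine Finset.sum_congr rfl fun i _ => ?_
          rw [smul_smul]
          rw [← add_smul]
          ring_nf
      _ = ∑ i, ((c:𝕜) * α i) • w i +
            (μ:𝕜) • ∑ k, ((((d:𝕜) - (n:𝕜))/(n:𝕜)) * α k) • w k := by
          rw [Finset.sum_add_distrib, Finset.smul_sum]
      _ = ∑ i, ((c:𝕜) * α i) • w i +
            (μ:𝕜) • ∑ k, ∑ j, (if j = k then (0:𝕜) else α k * (inner 𝕜 (w j) (w k) : 𝕜)) • w j := by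
          rw [Finset.sum_congr rfl fun k _ => (step1 k).symm]
      _ = ∑ j, ((c:𝕜) * α j) • w j +
            (μ:𝕜) • ∑ j, ∑ k, (if j = k then (0:𝕜) else α k * (inner 𝕜 (w j) (w k) : 𝕜)) • w j := by
          rw [Finset.sum_comm]
      _ = ∑ j, (((c:𝕜) * α j +
            (μ:𝕜) * ∑ k, (if j = k then (0:𝕜) else α k * (inner 𝕜 (w j) (w k) : 𝕜))) • w j) := by
          rw [Finset.smul_sum, ← Finset.sum_add_distrib]
          refine Finset.sum_congr rfl fun j _ => ?_
          rw [add_smul, mul_smul (μ:𝕜), Finset.sum_smul]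
end

section
/- Let u_1, ..., u_N ∈ K^n be a tight frame with constant 1, all u_i ≠ 0, and t ∈ ℝ^N with nonnegative entries and ‖t‖ = 1. Then Σ_{i,j=1}^N t_i t_j |⟨u_i, u_j⟩|² / (‖u_i‖‖u_j‖) ≤ 1. -/
/-- For a tight frame `u 1, ..., u N` with constant 1 in `𝕜^n` consisting of
nonzero vectors, and `t ∈ ℝ^N` with nonnegative entries and `‖t‖ = 1`,
`∑_{i,j} tᵢtⱼ|⟨uᵢ,uⱼ⟩|²/(‖uᵢ‖‖uⱼ‖) ≤ 1`. -/
theorem tight_frame_double_sum_le_one {𝕜 : Type*} [RCLike 𝕜] (n N : ℕ)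
    (u : Fin N → EuclideanSpace 𝕜 (Fin n))
    (hframe : ∀ x : EuclideanSpace 𝕜 (Fin n), x = ∑ i, (inner 𝕜 (u i) x : 𝕜) • u i)
    (hu0 : ∀ i, u i ≠ 0)
    (t : Fin N → ℝ) (ht0 : ∀ i, 0 ≤ t i) (ht : ∑ i, t i ^ 2 = 1) :
    ∑ i, ∑ j, t i * t j * ‖(inner 𝕜 (u i) (u j) : 𝕜)‖ ^ 2 / (‖u i‖ * ‖u j‖) ≤ 1 := by
  -- Parseval-type identity from the tight frame condition
  have key : ∀ x : EuclideanSpace 𝕜 (Fin n),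
      ∑ i, ‖(inner 𝕜 (u i) x : 𝕜)‖ ^ 2 = ‖x‖ ^ 2 := by
    intro x
    have h1 : (inner 𝕜 x x : 𝕜) = ((∑ i, ‖(inner 𝕜 (u i) x : 𝕜)‖ ^ 2 : ℝ) : 𝕜) := by
      calc (inner 𝕜 x x : 𝕜)
          = inner 𝕜 x (∑ i, (inner 𝕜 (u i) x : 𝕜) • u i) := by rw [← hframe x]
        _ = ∑ i, (inner 𝕜 (u i) x : 𝕜) * inner 𝕜 x (u i) := by
            rw [inner_sum]; simp [inner_smul_right]
        _ = ((∑ i, ‖(inner 𝕜 (u i) x : 𝕜)‖ ^ 2 : ℝ) : 𝕜) := by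
            push_cast
            refine Finset.sum_congr rfl fun i _ => ?_
            rw [← inner_conj_symm x (u i), RCLike.mul_conj]
    have h2 := congrArg RCLike.re h1
    rw [inner_self_eq_norm_sq, RCLike.ofReal_re] at h2
    exact h2.symm
  have hnorm : ∀ i, ∑ j, ‖(inner 𝕜 (u i) (u j) : 𝕜)‖ ^ 2 = ‖u i‖ ^ 2 := by
    intro i
    rw [← key (u i)]
    exact Finset.sum_congr rfl fun j _ => by rw [norm_inner_symm]
  have hu0' : ∀ i, ‖u i‖ ≠ 0 := fun i => norm_ne_zero_iff.mpr (hu0 i)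
  set A : Fin N × Fin N → ℝ :=
    fun p => t p.1 * ‖(inner 𝕜 (u p.1) (u p.2) : 𝕜)‖ / ‖u p.1‖ with hAdef
  set B : Fin N × Fin N → ℝ :=
    fun p => t p.2 * ‖(inner 𝕜 (u p.1) (u p.2) : 𝕜)‖ / ‖u p.2‖ with hBdef
  have hS : ∑ i, ∑ j, t i * t j * ‖(inner 𝕜 (u i) (u j) : 𝕜)‖ ^ 2 / (‖u i‖ * ‖u j‖)
      = ∑ p : Fin N × Fin N, A p * B p := by
    rw [Fintype.sum_prod_type]
    refine Finset.sum_congr rfl fun i _ => Finset.sum_congr rfl fun j _ => ?_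
    simp only [hAdef, hBdef]
    ring
  have hA : ∑ p : Fin N × Fin N, A p ^ 2 = 1 := by
    rw [Fintype.sum_prod_type]
    have : ∀ i : Fin N, ∑ j, A (i, j) ^ 2 = t i ^ 2 := by
      intro i
      have : ∑ j, A (i, j) ^ 2
          = (∑ j, ‖(inner 𝕜 (u i) (u j) : 𝕜)‖ ^ 2) * (t i ^ 2 / ‖u i‖ ^ 2) := by
        rw [Finset.sum_mul]
        refine Finset.sum_congr rfl fun j _ => ?_
        simp only [hAdef]
        ring
      rw [this, hnorm i]
      field_simp [hu0' i]
    simp_rw [this]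
    exact ht
  have hB : ∑ p : Fin N × Fin N, B p ^ 2 = 1 := by
    rw [Fintype.sum_prod_type_right]
    have : ∀ j : Fin N, ∑ i, B (i, j) ^ 2 = t j ^ 2 := by
      intro j
      have : ∑ i, B (i, j) ^ 2
          = (∑ i, ‖(inner 𝕜 (u i) (u j) : 𝕜)‖ ^ 2) * (t j ^ 2 / ‖u j‖ ^ 2) := by
        rw [Finset.sum_mul]
        refine Finset.sum_congr rfl fun i _ => ?_
        simp only [hBdef]
        ring
      rw [this, key (u j)]
      field_simp [hu0' j]
    simp_rw [this]
    exact ht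
  have hCS := Finset.sum_mul_sq_le_sq_mul_sq Finset.univ A B
  rw [hA, hB, mul_one] at hCS
  have hnn : 0 ≤ ∑ p : Fin N × Fin N, A p * B p := by
    refine Finset.sum_nonneg fun p _ => mul_nonneg ?_ ?_ <;>
      exact div_nonneg (mul_nonneg (ht0 _) (norm_nonneg _)) (norm_nonneg _)
  rw [hS]
  nlinarith [hCS, hnn]
end

section
/- Let w_1, ..., w_d be a maximal equiangular tight frame in K^n, with |⟨w_i,w_j⟩| = φ for i ≠ j. Suppose N = Σ_{j=1}^d |A_j| for a partition A_1, ..., A_d of {1,...,N}, t ∈ ℝ^N has nonnegative entries with Σ_{i∈A_j} t_i² = 1/d for each j, and u_i = √n · t_i · w_{j(i)} where j(i) is the index with i ∈ A_{j(i)}. Then Σ_{i,j=1}^N t_i t_j |⟨u_i, u_j⟩| = (n/d)((d-1)φ + 1). -/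
/-- Value of the frame functional at the equality configuration: if `w` is a
maximal ETF in `𝕜^n`, the index set `{1, ..., N}` is partitioned into the fibers
`A_j = {i : c i = j}` of a map `c`, `∑_{i ∈ A_j} tᵢ² = 1/d` for every `j`, and
`uᵢ = √n · tᵢ • w (c i)`, then `∑_{i,j} tᵢ tⱼ |⟨uᵢ, uⱼ⟩| = (n/d)((d-1)φ + 1)`. -/
theorem frame_functional_at_equality_configuration {𝕜 : Type*} [RCLike 𝕜]
    (n d N : ℕ) (hn : 2 ≤ n) (φ : ℝ)
    (hcase :
      ((RCLike.I : 𝕜) = 0 ∧ (d : ℝ) = (n : ℝ) * ((n : ℝ) + 1) / 2 ∧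
        φ = 1 / Real.sqrt ((n : ℝ) + 2)) ∨
      ((RCLike.I : 𝕜) ≠ 0 ∧ (d : ℝ) = (n : ℝ) ^ 2 ∧
        φ = 1 / Real.sqrt ((n : ℝ) + 1)))
    (w : Fin d → EuclideanSpace 𝕜 (Fin n))
    (hunit : ∀ i, ‖w i‖ = 1)
    (hequi : ∀ i j, i ≠ j → ‖(inner 𝕜 (w i) (w j) : 𝕜)‖ = φ)
    (hframe : ∀ x : EuclideanSpace 𝕜 (Fin n),
      x = ((n : 𝕜) / (d : 𝕜)) • ∑ i, (inner 𝕜 (w i) x : 𝕜) • w i)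
    (t : Fin N → ℝ) (ht0 : ∀ i, 0 ≤ t i)
    (c : Fin N → Fin d)
    (hpart : ∀ j : Fin d,
      ∑ i ∈ Finset.univ.filter (fun i => c i = j), t i ^ 2 = 1 / (d : ℝ))
    (u : Fin N → EuclideanSpace 𝕜 (Fin n))
    (hu : ∀ i, u i = ((Real.sqrt n * t i : ℝ) : 𝕜) • w (c i)) :
    ∑ i, ∑ j, t i * t j * ‖(inner 𝕜 (u i) (u j) : 𝕜)‖ =
      (n : ℝ) / (d : ℝ) * (((d : ℝ) - 1) * φ + 1) := by

  have hn0 : (0:ℝ) < (n:ℝ) := by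
    have : 0 < n := lt_of_lt_of_le (by norm_num) hn
    exact_mod_cast this
  have hd0 : (0:ℝ) < (d:ℝ) := by
    rcases hcase with ⟨_, hd, _⟩ | ⟨_, hd, _⟩ <;> rw [hd] <;> nlinarith
  have hd0' : (d:ℝ) ≠ 0 := ne_of_gt hd0
  have key : ∀ i j, t i * t j * ‖(inner 𝕜 (u i) (u j) : 𝕜)‖
      = (n:ℝ) * (t i ^ 2 * (t j ^ 2 * (if c j = c i then (1:ℝ) else φ))) := by
    intro i j
    rw [hu i, hu j, inner_smul_left, inner_smul_right, norm_mul, norm_mul,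
      RCLike.norm_conj]
    rw [RCLike.norm_ofReal, RCLike.norm_ofReal,
      abs_of_nonneg (mul_nonneg (Real.sqrt_nonneg _) (ht0 i)),
      abs_of_nonneg (mul_nonneg (Real.sqrt_nonneg _) (ht0 j))]
    by_cases h : c j = c i
    · rw [if_pos h, h]
      have : ‖(inner 𝕜 (w (c i)) (w (c i)) : 𝕜)‖ = 1 := by
        rw [inner_self_eq_norm_sq_to_K, norm_pow, RCLike.norm_ofReal,
          abs_of_nonneg (norm_nonneg _), hunit]
        norm_num
      rw [this]
      have hs : Real.sqrt n ^ 2 = (n:ℝ) := Real.sq_sqrt hn0.le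
      linear_combination (t i ^ 2 * t j ^ 2) * hs
    · rw [if_neg h, hequi _ _ (fun hh => h hh.symm)]
      have hs : Real.sqrt n ^ 2 = (n:ℝ) := Real.sq_sqrt hn0.le
      linear_combination (φ * t i ^ 2 * t j ^ 2) * hs
  have hsum1 : ∑ i, t i ^ 2 = 1 := by
    rw [← Finset.sum_fiberwise Finset.univ c (fun i => t i ^ 2)]
    simp only [hpart]
    rw [Finset.sum_const, Finset.card_univ, Fintype.card_fin, nsmul_eq_mul]
    field_simp
  have inner_sum : ∀ i : Fin N, ∑ j, t j ^ 2 * (if c j = c i then (1:ℝ) else φ)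
      = φ + (1 - φ) / (d:ℝ) := by
    intro i
    have : ∀ j, t j ^ 2 * (if c j = c i then (1:ℝ) else φ)
        = φ * t j ^ 2 + (if c j = c i then (1 - φ) * t j ^ 2 else 0) := by
      intro j; by_cases h : c j = c i <;> simp [h] <;> ring
    rw [Finset.sum_congr rfl (fun j _ => this j), Finset.sum_add_distrib,
      ← Finset.mul_sum, hsum1, ← Finset.sum_filter, ← Finset.mul_sum, hpart]
    ring
  calc ∑ i, ∑ j, t i * t j * ‖(inner 𝕜 (u i) (u j) : 𝕜)‖
      = ∑ i : Fin N, (n:ℝ) * t i ^ 2 * (φ + (1 - φ) / (d:ℝ)) := by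
        refine Finset.sum_congr rfl fun i _ => ?_
        rw [Finset.sum_congr rfl fun j _ => key i j, ← Finset.mul_sum,
          ← Finset.mul_sum, inner_sum i]
        ring
    _ = (n:ℝ) * (φ + (1 - φ) / (d:ℝ)) := by
        have h2 : ∑ i : Fin N, (n:ℝ) * t i ^ 2 * (φ + (1 - φ) / (d:ℝ))
            = (n:ℝ) * (φ + (1 - φ) / (d:ℝ)) * ∑ i, t i ^ 2 := by
          rw [Finset.mul_sum]
          exact Finset.sum_congr rfl fun i _ => by ring
        rw [h2, hsum1, mul_one]
    _ = (n : ℝ) / (d : ℝ) * (((d : ℝ) - 1) * φ + 1) := by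
        field_simp
        ring
end

section
/- Let w_1, ..., w_d be a maximal equiangular tight frame in K^n, δ = δ_K(n), C = δ/n. Suppose u_1, ..., u_N ∈ K^n and t ∈ ℝ^N satisfy: there is a partition A_1,...,A_d of the indices with nonzero u_i such that u_i = √n t_i w_{j} for i ∈ A_j, Σ_{i∈A_j} t_i² = 1/d for each j, and t_i = 0 whenever u_i = 0. Then for every index j with u_j ≠ 0: u_j = (n t_j / δ) · Σ_{i=1}^N t_i sgn⟨u_j, u_i⟩ u_i (where terms with u_i = 0 are zero). -/
open Classical

/-- Equality-configuration lemma (Lemma `lemtiui`): let `w` be a maximal ETF in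
`𝕜^n` and suppose the nonzero vectors among `u 1, ..., u N` are partitioned by a
map `c` so that `uᵢ = √n tᵢ • w (c i)` when `uᵢ ≠ 0`, with
`∑_{i ∈ A_j} tᵢ² = 1/d` for every `j`, and `tᵢ = 0` whenever `uᵢ = 0`. Then for
every `j` with `uⱼ ≠ 0`:
`uⱼ = (n tⱼ/δ) • ∑ i, tᵢ sgn⟨uⱼ, uᵢ⟩ • uᵢ` (with `sgn z = z/|z|`, terms with
`uᵢ = 0` vanishing). In Mathlib's convention the paper's `⟨uⱼ, uᵢ⟩` is
`inner 𝕜 (u i) (u j)`. -/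
theorem equality_configuration_sign_combination {𝕜 : Type*} [RCLike 𝕜]
    (n d N : ℕ) (hn : 2 ≤ n) (φ δ : ℝ)
    (hcase :
      ((RCLike.I : 𝕜) = 0 ∧ (d : ℝ) = (n : ℝ) * ((n : ℝ) + 1) / 2 ∧
        φ = 1 / Real.sqrt ((n : ℝ) + 2) ∧
        δ = 2 / ((n : ℝ) + 1) * (1 + ((n : ℝ) - 1) / 2 * Real.sqrt ((n : ℝ) + 2))) ∨
      ((RCLike.I : 𝕜) ≠ 0 ∧ (d : ℝ) = (n : ℝ) ^ 2 ∧
        φ = 1 / Real.sqrt ((n : ℝ) + 1) ∧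
        δ = 1 / (n : ℝ) * (1 + ((n : ℝ) - 1) * Real.sqrt ((n : ℝ) + 1))))
    (w : Fin d → EuclideanSpace 𝕜 (Fin n))
    (hunit : ∀ i, ‖w i‖ = 1)
    (hequi : ∀ i j, i ≠ j → ‖(inner 𝕜 (w i) (w j) : 𝕜)‖ = φ)
    (hframe : ∀ x : EuclideanSpace 𝕜 (Fin n),
      x = ((n : 𝕜) / (d : 𝕜)) • ∑ i, (inner 𝕜 (w i) x : 𝕜) • w i)
    (u : Fin N → EuclideanSpace 𝕜 (Fin n)) (t : Fin N → ℝ) (ht0 : ∀ i, 0 ≤ t i)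
    (c : Fin N → Fin d)
    (hu : ∀ i, u i ≠ 0 → u i = ((Real.sqrt n * t i : ℝ) : 𝕜) • w (c i))
    (hpart : ∀ j : Fin d,
      ∑ i, (if u i ≠ 0 ∧ c i = j then t i ^ 2 else 0) = 1 / (d : ℝ))
    (ht0' : ∀ i, u i = 0 → t i = 0) :
    ∀ j, u j ≠ 0 →
      u j = (((n : ℝ) * t j / δ : ℝ) : 𝕜) •
        ∑ i, (((t i : ℝ) : 𝕜) *
          ((inner 𝕜 (u i) (u j) : 𝕜) / (‖(inner 𝕜 (u i) (u j) : 𝕜)‖ : 𝕜))) • u i := by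
  classical
  have hnR : (2:ℝ) ≤ (n:ℝ) := by exact_mod_cast hn
  have hnpos : (0:ℝ) < (n:ℝ) := by linarith
  have hs2 : (0:ℝ) < Real.sqrt ((n:ℝ)+2) := Real.sqrt_pos.mpr (by linarith)
  have hs1 : (0:ℝ) < Real.sqrt ((n:ℝ)+1) := Real.sqrt_pos.mpr (by linarith)
  have hφpos : 0 < φ := by
    rcases hcase with ⟨_, _, hφ, _⟩ | ⟨_, _, hφ, _⟩ <;> rw [hφ] <;> positivity
  have hδpos : 0 < δ := by
    rcases hcase with ⟨_, _, _, hδ⟩ | ⟨_, _, _, hδ⟩ <;> rw [hδ]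
    · have h1 : (0:ℝ) ≤ ((n:ℝ)-1)/2 * Real.sqrt ((n:ℝ)+2) :=
        mul_nonneg (by linarith) hs2.le
      have h2 : (0:ℝ) < 2/((n:ℝ)+1) := by positivity
      nlinarith
    · have h1 : (0:ℝ) ≤ ((n:ℝ)-1) * Real.sqrt ((n:ℝ)+1) :=
        mul_nonneg (by linarith) hs1.le
      have h2 : (0:ℝ) < 1/(n:ℝ) := by positivity
      nlinarith
  have hdpos : (0:ℝ) < (d:ℝ) := by
    rcases hcase with ⟨_, hd, _, _⟩ | ⟨_, hd, _, _⟩ <;> rw [hd] <;> positivity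
  have hn1 : ((n:ℝ)+1) ≠ 0 := by linarith
  have hkey : 1 - (n:ℝ)*(1-φ)/(d:ℝ) = φ * δ := by
    rcases hcase with ⟨_, hd, hφ, hδ⟩ | ⟨_, hd, hφ, hδ⟩ <;> rw [hd, hφ, hδ]
    · field_simp
      ring
    · field_simp
      ring
  -- inner products of frame vectors with themselves
  have hinner_self : ∀ k, (inner 𝕜 (w k) (w k) : 𝕜) = 1 := by
    intro k
    rw [inner_self_eq_norm_sq_to_K, hunit k]
    norm_num
  -- per-term decomposition of the frame sum
  have hterm : ∀ k i, (inner 𝕜 (w i) (w k):𝕜) • w i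
      = ((φ:ℝ):𝕜) • ((((inner 𝕜 (w i) (w k):𝕜)) / (‖(inner 𝕜 (w i) (w k):𝕜)‖:𝕜)) • w i)
        + (if i = k then ((1-φ:ℝ):𝕜) • w k else 0) := by
    intro k i
    by_cases h : i = k
    · subst h
      rw [hinner_self i]
      simp only [if_pos rfl, norm_one, RCLike.ofReal_one, div_one, one_smul, ite_true,
        eq_self_iff_true]
      have hone : ((φ:ℝ):𝕜) + ((1-φ:ℝ):𝕜) = 1 := by push_cast; ring
      rw [← add_smul, hone, one_smul]
    · have hnorm := hequi i k h
      simp only [if_neg h, add_zero]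
      rw [smul_smul]
      congr 1
      have hφne : ((φ:ℝ):𝕜) ≠ 0 := by
        simp only [ne_eq, RCLike.ofReal_eq_zero]
        exact hφpos.ne'
      rw [hnorm, mul_div_assoc']
      rw [mul_comm]
      rw [mul_div_assoc]
      rw [div_self hφne, mul_one]
  -- the sign-sum identity for frame vectors
  have hS : ∀ k, (∑ i, (((inner 𝕜 (w i) (w k):𝕜)) / (‖(inner 𝕜 (w i) (w k):𝕜)‖:𝕜)) • w i)
      = ((((d:ℝ)*δ/(n:ℝ) : ℝ)):𝕜) • w k := by
    intro k
    set A : EuclideanSpace 𝕜 (Fin n) :=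
      ∑ i, (((inner 𝕜 (w i) (w k):𝕜)) / (‖(inner 𝕜 (w i) (w k):𝕜)‖:𝕜)) • w i with hA
    have hf := hframe (w k)
    rw [Finset.sum_congr rfl (fun i _ => hterm k i), Finset.sum_add_distrib] at hf
    rw [← Finset.smul_sum, ← hA] at hf
    rw [Finset.sum_ite_eq' Finset.univ k (fun _ => ((1-φ:ℝ):𝕜) • w k)] at hf
    simp only [Finset.mem_univ, if_pos] at hf
    rw [smul_add, smul_smul, smul_smul] at hf
    -- hf : w k = c1 • A + c2 • w k
    have h2 := sub_eq_of_eq_add hf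
    -- h2 : w k - (c1 • A) = c2 • w k  -- need orientation: sub_eq_of_eq_add : a = c + b → a - b = c
    have hn0 : n ≠ 0 := by omega
    have hd0 : d ≠ 0 := by rintro rfl; simp at hdpos
    have hc1 : ((n:𝕜)/(d:𝕜) * ((φ:ℝ):𝕜)) ≠ 0 := by
      apply mul_ne_zero
      · exact div_ne_zero (by exact_mod_cast hn0) (by exact_mod_cast hd0)
      · simp only [ne_eq, RCLike.ofReal_eq_zero]
        exact hφpos.ne'
    have hscR : ((n:ℝ)/(d:ℝ)*φ) * ((d:ℝ)*δ/(n:ℝ)) = 1 - (n:ℝ)/(d:ℝ)*(1-φ) := by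
      have e1 : 1 - (n:ℝ)/(d:ℝ)*(1-φ) = φ*δ := by rw [← hkey]; ring
      rw [e1]
      field_simp
    have hsc : ((n:𝕜)/(d:𝕜) * ((φ:ℝ):𝕜)) * ((((d:ℝ)*δ/(n:ℝ) : ℝ)):𝕜)
        = 1 - (n:𝕜)/(d:𝕜) * ((1-φ:ℝ):𝕜) := by
      have h := congrArg (fun x : ℝ => (x : 𝕜)) hscR
      push_cast at h ⊢
      linear_combination h
    have hgoal : ((n:𝕜)/(d:𝕜) * ((φ:ℝ):𝕜)) • A
        = ((n:𝕜)/(d:𝕜) * ((φ:ℝ):𝕜)) • (((((d:ℝ)*δ/(n:ℝ) : ℝ)):𝕜) • w k) := by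
      rw [smul_smul, hsc, sub_smul, one_smul, h2]
    exact smul_right_injective (EuclideanSpace 𝕜 (Fin n)) hc1 hgoal
  intro j hj
  have htpos : ∀ i, u i ≠ 0 → 0 < t i := by
    intro i hi
    rcases (ht0 i).lt_or_eq with h | h
    · exact h
    · exfalso; apply hi; rw [hu i hi, ← h]; simp
  have htj : 0 < t j := htpos j hj
  -- per-term rewriting of the goal sum
  have hterm2 : ∀ i, (((t i : ℝ):𝕜) * ((inner 𝕜 (u i) (u j):𝕜) / (‖(inner 𝕜 (u i) (u j):𝕜)‖:𝕜))) • u i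
      = ((Real.sqrt n * t i^2 : ℝ):𝕜) •
        ((((inner 𝕜 (w (c i)) (w (c j)):𝕜)) / (‖(inner 𝕜 (w (c i)) (w (c j)):𝕜)‖:𝕜)) • w (c i)) := by
    intro i
    by_cases hi : u i = 0
    · rw [hi, ht0' i hi]; simp
    · have hti : 0 < t i := htpos i hi
      have hui := hu i hi
      have huj := hu j hj
      have ha : (0:ℝ) < Real.sqrt n * t i * (Real.sqrt n * t j) := by
        have h0 : (0:ℝ) < Real.sqrt n := Real.sqrt_pos.mpr hnpos
        positivity
      have hinner : (inner 𝕜 (u i) (u j) : 𝕜)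
          = ((Real.sqrt n * t i * (Real.sqrt n * t j) : ℝ):𝕜) * (inner 𝕜 (w (c i)) (w (c j)) : 𝕜) := by
        rw [hui, huj, inner_smul_left, inner_smul_right, RCLike.conj_ofReal]
        push_cast; ring
      have hnormin : ‖(inner 𝕜 (u i) (u j) : 𝕜)‖
          = (Real.sqrt n * t i * (Real.sqrt n * t j)) * ‖(inner 𝕜 (w (c i)) (w (c j)) : 𝕜)‖ := by
        rw [hinner, norm_mul, RCLike.norm_ofReal, abs_of_pos ha]
      have haK : ((Real.sqrt n * t i * (Real.sqrt n * t j) : ℝ):𝕜) ≠ 0 := by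
        simp only [ne_eq, RCLike.ofReal_eq_zero]
        exact ha.ne'
      rw [hnormin, hinner, hui, smul_smul, smul_smul]
      congr 1
      rw [RCLike.ofReal_mul (Real.sqrt ↑n * t i * (Real.sqrt ↑n * t j))]
      rw [mul_div_mul_left _ _ haK]
      push_cast
      ring
  have hsum1 : (∑ i, (((t i : ℝ):𝕜) *
        ((inner 𝕜 (u i) (u j):𝕜) / (‖(inner 𝕜 (u i) (u j):𝕜)‖:𝕜))) • u i)
      = ∑ i, ((Real.sqrt n * t i^2 : ℝ):𝕜) •
        ((((inner 𝕜 (w (c i)) (w (c j)):𝕜)) / (‖(inner 𝕜 (w (c i)) (w (c j)):𝕜)‖:𝕜)) • w (c i)) :=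
    Finset.sum_congr rfl (fun i _ => hterm2 i)
  -- regroup by classes
  have hsum_t : ∀ k, ∑ i, (if c i = k then t i^2 else 0 : ℝ) = 1/(d:ℝ) := by
    intro k
    rw [← hpart k]
    apply Finset.sum_congr rfl
    intro i _
    by_cases h0 : u i = 0
    · simp [h0, ht0' i h0]
    · simp [h0]
  have hregroup : (∑ i, ((Real.sqrt n * t i^2 : ℝ):𝕜) •
        ((((inner 𝕜 (w (c i)) (w (c j)):𝕜)) / (‖(inner 𝕜 (w (c i)) (w (c j)):𝕜)‖:𝕜)) • w (c i)))
      = ∑ k : Fin d, ((Real.sqrt n * (1/(d:ℝ)) : ℝ):𝕜) •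
        ((((inner 𝕜 (w k) (w (c j)):𝕜)) / (‖(inner 𝕜 (w k) (w (c j)):𝕜)‖:𝕜)) • w k) := by
    have step1 : ∀ i : Fin N, ((Real.sqrt n * t i^2 : ℝ):𝕜) •
        ((((inner 𝕜 (w (c i)) (w (c j)):𝕜)) / (‖(inner 𝕜 (w (c i)) (w (c j)):𝕜)‖:𝕜)) • w (c i))
      = ∑ k : Fin d, (if c i = k then ((Real.sqrt n * t i^2 : ℝ):𝕜) else 0) •
        ((((inner 𝕜 (w k) (w (c j)):𝕜)) / (‖(inner 𝕜 (w k) (w (c j)):𝕜)‖:𝕜)) • w k) := by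
      intro i
      symm
      calc (∑ k : Fin d, (if c i = k then ((Real.sqrt n * t i^2 : ℝ):𝕜) else 0) •
            ((((inner 𝕜 (w k) (w (c j)):𝕜)) / (‖(inner 𝕜 (w k) (w (c j)):𝕜)‖:𝕜)) • w k))
          = ∑ k : Fin d, (if c i = k then ((Real.sqrt n * t i^2 : ℝ):𝕜) •
            ((((inner 𝕜 (w k) (w (c j)):𝕜)) / (‖(inner 𝕜 (w k) (w (c j)):𝕜)‖:𝕜)) • w k) else 0) := by
            apply Finset.sum_congr rfl; intro k _; split <;> simp
        _ = _ := by
            rw [Finset.sum_ite_eq]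
            simp
    rw [Finset.sum_congr rfl (fun i _ => step1 i), Finset.sum_comm]
    apply Finset.sum_congr rfl
    intro k _
    rw [← Finset.sum_smul]
    congr 1
    have hr : ∑ i, (if c i = k then (Real.sqrt n * t i^2 : ℝ) else 0)
        = Real.sqrt n * (1/(d:ℝ)) := by
      rw [← hsum_t k, Finset.mul_sum]
      exact Finset.sum_congr rfl fun i _ => by split <;> simp
    calc (∑ i, (if c i = k then ((Real.sqrt n * t i^2 : ℝ):𝕜) else 0))
        = ((∑ i, (if c i = k then (Real.sqrt n * t i^2 : ℝ) else 0) : ℝ) : 𝕜) := by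
          push_cast [apply_ite (fun x : ℝ => (x : 𝕜))]
          rfl
      _ = ((Real.sqrt n * (1/(d:ℝ)) : ℝ):𝕜) := by rw [hr]
  rw [hsum1, hregroup, ← Finset.smul_sum, hS (c j), hu j hj, smul_smul, smul_smul]
  congr 1
  have hfin : (n:ℝ)*t j/δ * (Real.sqrt n * (1/(d:ℝ))) * ((d:ℝ)*δ/(n:ℝ))
      = Real.sqrt n * t j := by
    field_simp
  have h := congrArg (fun x : ℝ => (x : 𝕜)) hfin
  push_cast at h ⊢
  linear_combination - h
end

section
/- In ℂ², the four vectors (1,0), (1/√3)(1,√2), (1/√3)(1,√2ω), (1/√3)(1,√2ω²), where ω = e^{2πi/3}, form an equiangular tight frame: each is a unit vector, the modulus of the inner product of any two distinct vectors equals 1/√3, and x = (1/2)Σ_{i=1}^4 ⟨x, w_i⟩ w_i for all x ∈ ℂ². -/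
/-- In `ℂ²`, the four vectors `(1,0)`, `(1/√3)(1,√2)`, `(1/√3)(1,√2ω)`,
`(1/√3)(1,√2ω²)`, where `ω = e^{2πi/3}`, form an equiangular tight frame:
each is a unit vector, distinct vectors have inner products of modulus `1/√3`,
and `x = (1/2)∑ ⟨x, wᵢ⟩ • wᵢ` for all `x ∈ ℂ²`. -/
theorem complex_two_dim_maximal_etf :
    let ω : ℂ := Complex.exp (2 * Real.pi * Complex.I / 3)
    let w : Fin 4 → EuclideanSpace ℂ (Fin 2) :=
      ![(WithLp.equiv 2 (Fin 2 → ℂ)).symm ![1, 0],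
        (WithLp.equiv 2 (Fin 2 → ℂ)).symm
          ![((Real.sqrt 3 : ℝ) : ℂ)⁻¹, ((Real.sqrt 2 : ℝ) : ℂ) * ((Real.sqrt 3 : ℝ) : ℂ)⁻¹],
        (WithLp.equiv 2 (Fin 2 → ℂ)).symm
          ![((Real.sqrt 3 : ℝ) : ℂ)⁻¹, ((Real.sqrt 2 : ℝ) : ℂ) * ((Real.sqrt 3 : ℝ) : ℂ)⁻¹ * ω],
        (WithLp.equiv 2 (Fin 2 → ℂ)).symm
          ![((Real.sqrt 3 : ℝ) : ℂ)⁻¹, ((Real.sqrt 2 : ℝ) : ℂ) * ((Real.sqrt 3 : ℝ) : ℂ)⁻¹ * ω ^ 2]]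
    (∀ i, ‖w i‖ = 1) ∧
      (∀ i j, i ≠ j → ‖(inner ℂ (w i) (w j) : ℂ)‖ = 1 / Real.sqrt 3) ∧
      (∀ x : EuclideanSpace ℂ (Fin 2), x = (1 / 2 : ℂ) • ∑ i, (inner ℂ (w i) x : ℂ) • w i) := by
  intro ω w
  have hω : ω = ((-1/2 : ℝ) : ℂ) + ((Real.sqrt 3 / 2 : ℝ) : ℂ) * Complex.I := by
    show Complex.exp _ = _
    have h : (2 * Real.pi * Complex.I / 3) = ((2 * Real.pi / 3 : ℝ) : ℂ) * Complex.I := by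
      push_cast; ring
    have h2 : (2 * Real.pi / 3 : ℝ) = Real.pi - Real.pi / 3 := by ring
    rw [h, Complex.exp_mul_I, ← Complex.ofReal_cos, ← Complex.ofReal_sin, h2,
      Real.cos_pi_sub, Real.sin_pi_sub, Real.cos_pi_div_three, Real.sin_pi_div_three]
    push_cast; ring
  have s3c : ((Real.sqrt 3 : ℝ) : ℂ) * ((Real.sqrt 3 : ℝ) : ℂ) = 3 := by
    norm_cast; exact Real.mul_self_sqrt (by norm_num)
  have s2c : ((Real.sqrt 2 : ℝ) : ℂ) * ((Real.sqrt 2 : ℝ) : ℂ) = 2 := by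
    norm_cast; exact Real.mul_self_sqrt (by norm_num)
  have h3i : ((Real.sqrt 3 : ℝ) : ℂ)⁻¹ * ((Real.sqrt 3 : ℝ) : ℂ)⁻¹ = 1/3 := by
    rw [← mul_inv, s3c]; norm_num
  have hI : Complex.I ^ 2 = -1 := Complex.I_sq
  have hsum : 1 + ω + ω ^ 2 = 0 := by
    rw [hω]; push_cast
    linear_combination (3/4 : ℂ) * hI + (Complex.I^2/4) * s3c
  have hω3 : ω ^ 3 = 1 := by linear_combination (ω - 1) * hsum
  have hconj : (starRingEnd ℂ) ω = ω ^ 2 := by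
    rw [hω, map_add, map_mul, Complex.conj_ofReal, Complex.conj_ofReal, Complex.conj_I]
    push_cast
    linear_combination (-Complex.I^2/4) * s3c - (3/4 : ℂ) * hI
  have hnsq : Complex.normSq ω = 1 := by
    rw [hω, Complex.normSq_apply]
    simp
    nlinarith [Real.sq_sqrt (by norm_num : (3:ℝ) ≥ 0), Real.sqrt_nonneg 3]
  have habsω : ‖ω‖ = 1 := by rw [Complex.norm_def, hnsq, Real.sqrt_one]
  clear_value ω
  have habs : ∀ z : ℂ, (z = 1/3 + 2/3*ω ∨ z = 1/3 + 2/3*ω^2) →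
      ‖z‖ = (Real.sqrt 3)⁻¹ := by
    intro z h
    have hsq : Complex.normSq z = 1/3 := by
      have hc : (Complex.normSq z : ℂ) = ((1/3 : ℝ) : ℂ) := by
        rw [← Complex.mul_conj]
        push_cast
        rcases h with h | h <;> rw [h] <;>
          simp only [map_add, map_mul, map_pow, map_div₀, map_one, map_ofNat,
            Complex.conj_ofReal, hconj] <;>
          [linear_combination (2/9 : ℂ)*hsum + (4/9 : ℂ)*hω3;
           linear_combination (2/9 : ℂ)*hsum + ((2/9)*ω + (4/9)*(ω^3+1))*hω3]
      exact Complex.ofReal_inj.1 hc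
    rw [Complex.norm_def, hsq, show (1/3:ℝ) = 3⁻¹ by norm_num, Real.sqrt_inv]
  refine ⟨?_, ?_, ?_⟩
  · intro i
    fin_cases i <;> rw [EuclideanSpace.norm_eq] <;>
        simp [w, Fin.sum_univ_two, WithLp.equiv_symm_apply, PiLp.toLp_apply, habsω] <;>
      rw [abs_of_nonneg (Real.sqrt_nonneg _), abs_of_nonneg (Real.sqrt_nonneg _), mul_pow,
        inv_pow, Real.sq_sqrt (by norm_num : (0:ℝ) ≤ 2), Real.sq_sqrt (by norm_num : (0:ℝ) ≤ 3)] <;>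
      norm_num
  · intro i j hij
    have sA : ∀ z : ℂ, ‖z‖ = (Real.sqrt 3)⁻¹ → ‖z‖ = (Real.sqrt 3)⁻¹ := fun _ h => h
    fin_cases i <;> fin_cases j <;>
      [(exact absurd rfl hij); skip; skip; skip;
       skip; (exact absurd rfl hij); skip; skip;
       skip; skip; (exact absurd rfl hij); skip;
       skip; skip; skip; (exact absurd rfl hij)] <;>
      simp [PiLp.inner_apply, RCLike.inner_apply, Fin.sum_univ_two, WithLp.equiv_symm_apply, PiLp.toLp_apply,
        map_mul, map_inv₀, map_pow, Complex.conj_ofReal, hconj, w]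
    -- remaining: (1,2) (1,3) (2,1) (2,3) (3,1) (3,2)
    · exact habs _ (Or.inl (by
        linear_combination (1+ω*((Real.sqrt 2:ℝ):ℂ)*((Real.sqrt 2:ℝ):ℂ))*h3i + (ω/3)*s2c))
    · exact habs _ (Or.inr (by
        linear_combination (1+ω^2*((Real.sqrt 2:ℝ):ℂ)*((Real.sqrt 2:ℝ):ℂ))*h3i + (ω^2/3)*s2c))
    · exact habs _ (Or.inr (by
        linear_combination (1+ω^2*((Real.sqrt 2:ℝ):ℂ)*((Real.sqrt 2:ℝ):ℂ))*h3i + (ω^2/3)*s2c))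
    · exact habs _ (Or.inl (by
        linear_combination (1+ω*((Real.sqrt 2:ℝ):ℂ)*((Real.sqrt 2:ℝ):ℂ))*h3i + (ω/3)*s2c
          + (((Real.sqrt 2:ℝ):ℂ)*((Real.sqrt 2:ℝ):ℂ)*((Real.sqrt 3:ℝ):ℂ)⁻¹*((Real.sqrt 3:ℝ):ℂ)⁻¹*ω)*hω3))
    · exact habs _ (Or.inl (by
        linear_combination (1+ω*((Real.sqrt 2:ℝ):ℂ)*((Real.sqrt 2:ℝ):ℂ))*h3i + (ω/3)*s2c
          + (((Real.sqrt 2:ℝ):ℂ)*((Real.sqrt 2:ℝ):ℂ)*((Real.sqrt 3:ℝ):ℂ)⁻¹*((Real.sqrt 3:ℝ):ℂ)⁻¹*ω)*hω3))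
    · exact habs _ (Or.inr (by
        linear_combination (1+ω^2*((Real.sqrt 2:ℝ):ℂ)*((Real.sqrt 2:ℝ):ℂ))*h3i + (ω^2/3)*s2c
          + (((Real.sqrt 2:ℝ):ℂ)*((Real.sqrt 2:ℝ):ℂ)*((Real.sqrt 3:ℝ):ℂ)⁻¹*((Real.sqrt 3:ℝ):ℂ)⁻¹*ω^2)*hω3))
  · intro x
    apply PiLp.ext
    intro k
    fin_cases k <;>
      simp [w, PiLp.inner_apply, RCLike.inner_apply, Fin.sum_univ_two, Fin.sum_univ_four,
        WithLp.equiv_symm_apply, PiLp.toLp_apply, map_mul, map_inv₀, map_pow, Complex.conj_ofReal, hconj,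
        PiLp.smul_apply, PiLp.add_apply, smul_eq_mul]
    · linear_combination (-(3:ℂ)/2*(x 0))*h3i
        + (-(1/2)*((Real.sqrt 2:ℝ):ℂ)*((Real.sqrt 3:ℝ):ℂ)⁻¹*((Real.sqrt 3:ℝ):ℂ)⁻¹*(x 1))*hsum
        + (-(1/2)*((Real.sqrt 2:ℝ):ℂ)*((Real.sqrt 3:ℝ):ℂ)⁻¹*((Real.sqrt 3:ℝ):ℂ)⁻¹*(x 1)*ω)*hω3
    · linear_combination (-(1/2)*((Real.sqrt 2:ℝ):ℂ)*((Real.sqrt 3:ℝ):ℂ)⁻¹*((Real.sqrt 3:ℝ):ℂ)⁻¹*(x 0))*hsum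
        + (-(1/2)*((Real.sqrt 2:ℝ):ℂ)*((Real.sqrt 2:ℝ):ℂ)*((Real.sqrt 3:ℝ):ℂ)⁻¹*((Real.sqrt 3:ℝ):ℂ)⁻¹*(ω^3+2)*(x 1))*hω3
        + (-(3:ℂ)/2*(x 1)*((Real.sqrt 2:ℝ):ℂ)*((Real.sqrt 2:ℝ):ℂ))*h3i
        + (-(1/2)*(x 1))*s2c
end
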